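/- Let ř : V ⊗ V → V ⊗ V be an involutive solution of the braid equation (ř² = id) and define Ř(λ) = λ ř + id for λ ∈ ℂ. Then Ř satisfies the parametric braid relation: Ř₁₂(λ₁ − λ₂) Ř₂₃(λ₁) Ř₁₂(λ₂) = Ř₂₃(λ₂) Ř₁₂(λ₁) Ř₂₃(λ₁ − λ₂) on V^{⊗3}, where Ř₁₂ = Ř ⊗ id and Ř₂₃ = id ⊗ Ř. -/

import Mathlib

/-! The identity holds in any algebra for two involutions `x`, `y` with `xyx = yxy`: expanding
both sides and using `x² = y² = 1`, all coefficients agree except those of `xyx` and `yxy`, which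
are both `λ₁ λ₂ (λ₁ - λ₂)`, and the braid relation identifies these two words. -/

open TensorProduct

noncomputable section

variable (V : Type*) [AddCommGroup V] [Module ℂ V]

/-- `ř ⊗ id` on `(V ⊗ V) ⊗ V`. -/
def R12 (rc : V ⊗[ℂ] V →ₗ[ℂ] V ⊗[ℂ] V) : (V ⊗[ℂ] V) ⊗[ℂ] V →ₗ[ℂ] (V ⊗[ℂ] V) ⊗[ℂ] V :=
  LinearMap.rTensor V rc

/-- `id ⊗ ř` on `(V ⊗ V) ⊗ V`, via the associator. -/
def R23 (rc : V ⊗[ℂ] V →ₗ[ℂ] V ⊗[ℂ] V) : (V ⊗[ℂ] V) ⊗[ℂ] V →ₗ[ℂ] (V ⊗[ℂ] V) ⊗[ℂ] V :=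
  (TensorProduct.assoc ℂ V V V).symm.toLinearMap ∘ₗ
    LinearMap.lTensor V rc ∘ₗ (TensorProduct.assoc ℂ V V V).toLinearMap

theorem baxterize_braid {R A : Type*} [CommRing R] [Ring A] [Algebra R A] {x y : A}
    (hx : x * x = 1) (hy : y * y = 1) (hxy : x * y * x = y * x * y) (a b : R) :
    ((a - b) • x + 1) * (a • y + 1) * (b • x + 1)
      = (b • y + 1) * (a • x + 1) * ((a - b) • y + 1) := by
  simp only [mul_add, add_mul, mul_smul_comm, smul_mul_assoc, mul_one, one_mul, hx, hy, hxy]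
  module

section

variable {V : Type*} [AddCommGroup V] [Module ℂ V] {rc : V ⊗[ℂ] V →ₗ[ℂ] V ⊗[ℂ] V}

theorem R12_comp_self (h : rc ∘ₗ rc = LinearMap.id) : R12 V rc ∘ₗ R12 V rc = LinearMap.id := by
  rw [R12, ← LinearMap.rTensor_comp, h, LinearMap.rTensor_id]

theorem R23_eq_conj :
    R23 V rc = (TensorProduct.assoc ℂ V V V).symm.conj (LinearMap.lTensor V rc) :=
  rfl

theorem R23_comp_self (h : rc ∘ₗ rc = LinearMap.id) : R23 V rc ∘ₗ R23 V rc = LinearMap.id := by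
  rw [R23_eq_conj, ← LinearEquiv.conj_comp, ← LinearMap.lTensor_comp, h, LinearMap.lTensor_id,
    LinearEquiv.conj_id]

end

theorem stmt3
    (rc : V ⊗[ℂ] V →ₗ[ℂ] V ⊗[ℂ] V)
    (hinv : rc ∘ₗ rc = LinearMap.id)
    (hbraid : R12 V rc ∘ₗ R23 V rc ∘ₗ R12 V rc = R23 V rc ∘ₗ R12 V rc ∘ₗ R23 V rc)
    (lam₁ lam₂ : ℂ) :
    ((lam₁ - lam₂) • R12 V rc + LinearMap.id) ∘ₗ (lam₁ • R23 V rc + LinearMap.id) ∘ₗ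
        (lam₂ • R12 V rc + LinearMap.id)
      = (lam₂ • R23 V rc + LinearMap.id) ∘ₗ (lam₁ • R12 V rc + LinearMap.id) ∘ₗ
        ((lam₁ - lam₂) • R23 V rc + LinearMap.id) := by
  have hbraid' : R12 V rc * R23 V rc * R12 V rc = R23 V rc * R12 V rc * R23 V rc := by
    simpa only [Module.End.mul_eq_comp, LinearMap.comp_assoc] using hbraid
  simpa only [Module.End.mul_eq_comp, Module.End.one_eq_id, LinearMap.comp_assoc] using
    baxterize_braid (A := Module.End ℂ ((V ⊗[ℂ] V) ⊗[ℂ] V))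
      (R12_comp_self hinv) (R23_comp_self hinv) hbraid' lam₁ lam₂
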